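/- arXiv:2101.08638 — 5 statements merged into one kernel-verified Lean document; each statement's English description precedes it below -/
import Mathlib

section
/- Fix an integer d ≥ 1 and ε in [0,1). The function R(δ) = h_b(δ)/(dδ + 1/(1-ε)) has a unique maximizer on (0,1), and this maximizer lies in the interval (0, 1/2]. -/
open Real Set

section aux
variable (D c : ℝ)

/-- numerator of the derivative of `G x = binEntropy x / (D x + c)`. -/
noncomputable def Nfun (x : ℝ) : ℝ :=
  (Real.log (1 - x) - Real.log x) * (D * x + c) - D * Real.binEntropy x

variable {D c}

lemma den_pos (hD : 0 ≤ D) (hc : 0 < c) {x : ℝ} (hx : 0 ≤ x) : 0 < D * x + c := by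
  nlinarith

lemma hasDerivAt_G (hD : 0 ≤ D) (hc : 0 < c) {x : ℝ} (hx : x ∈ Ioo (0:ℝ) 1) :
    HasDerivAt (fun y => Real.binEntropy y / (D * y + c))
      (Nfun D c x / (D * x + c)^2) x := by
  have h1 : HasDerivAt (fun y : ℝ => D * y + c) D x := by
    simpa using ((hasDerivAt_id x).const_mul D).add_const c
  have h2 := Real.hasDerivAt_binEntropy (p := x) (ne_of_gt hx.1) (ne_of_lt hx.2)
  have := h2.div h1 (ne_of_gt (den_pos hD hc hx.1.le))
  refine this.congr_deriv ?_
  unfold Nfun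
  ring

lemma hasDerivAt_N {x : ℝ} (hx : x ∈ Ioo (0:ℝ) 1) :
    HasDerivAt (Nfun D c) ((-1 / (1 - x) - 1 / x) * (D * x + c)) x := by
  have hx0 : x ≠ 0 := ne_of_gt hx.1
  have hx1 : (1 : ℝ) - x ≠ 0 := by
    have := hx.2; intro h; nlinarith
  have h1 : HasDerivAt (fun y : ℝ => Real.log (1 - y) - Real.log y)
      (-1 / (1 - x) - 1 / x) x := by
    have hA : HasDerivAt (fun y : ℝ => Real.log (1 - y)) (-1 / (1 - x)) x := by
      have : HasDerivAt (fun y : ℝ => 1 - y) (-1) x := by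
        simpa using (hasDerivAt_id x).const_sub 1
      simpa using this.log hx1
    have hB : HasDerivAt Real.log (1 / x) x := by
      simpa [one_div] using Real.hasDerivAt_log hx0
    exact hA.sub hB
  have h2 : HasDerivAt (fun y : ℝ => D * y + c) D x := by
    simpa using ((hasDerivAt_id x).const_mul D).add_const c
  have h3 := Real.hasDerivAt_binEntropy (p := x) hx0 (by intro h; exact hx1 (by rw [h]; ring))
  have := (h1.mul h2).sub ((h3.const_mul D))
  refine this.congr_deriv ?_
  ring

lemma N_strictAnti (hD : 0 ≤ D) (hc : 0 < c) : StrictAntiOn (Nfun D c) (Ioo 0 1) := by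
  apply strictAntiOn_of_deriv_neg (convex_Ioo 0 1)
  · intro x hx
    exact (hasDerivAt_N hx).continuousAt.continuousWithinAt
  · intro x hx
    rw [interior_Ioo] at hx
    rw [(hasDerivAt_N hx).deriv]
    have hx0 := hx.1
    have hx1 : 0 < 1 - x := by linarith [hx.2]
    have h1 : -1 / (1 - x) - 1 / x < 0 := by
      have ha : 0 < 1 / (1 - x) := by positivity
      have hb : 0 < 1 / x := by positivity
      have : -1 / (1 - x) = -(1 / (1 - x)) := by ring
      rw [this]; linarith
    exact mul_neg_of_neg_of_pos h1 (den_pos hD hc hx0.le)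

end aux

/-- Binary entropy function (base 2), with the convention `0 * log 0 = 0`. -/
noncomputable def binEnt (p : ℝ) : ℝ :=
  -p * Real.logb 2 p - (1 - p) * Real.logb 2 (1 - p)

lemma binEnt_eq (p : ℝ) : binEnt p = Real.binEntropy p / Real.log 2 := by
  unfold binEnt Real.binEntropy
  rw [Real.log_inv, Real.log_inv, Real.logb, Real.logb]
  ring

theorem unique_maximizer_in_half (d : ℕ) (hd : 1 ≤ d) (ε : ℝ) (hε : ε ∈ Set.Ico (0:ℝ) 1) :
    ∃ δ₀ : ℝ, δ₀ ∈ Set.Ioo (0:ℝ) 1 ∧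
      IsMaxOn (fun δ : ℝ => binEnt δ / (d * δ + 1 / (1 - ε))) (Set.Ioo (0:ℝ) 1) δ₀ ∧
      δ₀ ≤ 1 / 2 ∧
      ∀ δ : ℝ, δ ∈ Set.Ioo (0:ℝ) 1 →
        IsMaxOn (fun x : ℝ => binEnt x / (d * x + 1 / (1 - ε))) (Set.Ioo (0:ℝ) 1) δ →
        δ = δ₀ := by
  obtain ⟨hε0, hε1⟩ := hε
  set c : ℝ := 1 / (1 - ε) with hc_def
  have h1ε : 0 < 1 - ε := by linarith
  have hc1 : 1 ≤ c := by
    rw [hc_def, le_div_iff₀ h1ε]; linarith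
  have hc : 0 < c := by linarith
  set D : ℝ := (d : ℝ) with hD_def
  have hdD : (d : ℝ) = D := hD_def.symm
  have hD1 : 1 ≤ D := by rw [hD_def]; exact_mod_cast hd
  have hD : 0 ≤ D := by linarith
  have hDpos : 0 < D := by linarith
  set G : ℝ → ℝ := fun y => Real.binEntropy y / (D * y + c) with hG_def
  have hl2 : 0 < Real.log 2 := Real.log_pos (by norm_num)
  -- N at 1/2 is negative
  have hNhalf : Nfun D c (1/2) < 0 := by
    unfold Nfun
    have h1 : Real.binEntropy (1/2) = Real.log 2 := by
      rw [show (1/2 : ℝ) = 2⁻¹ by norm_num, Real.binEntropy_two_inv]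
    have h2 : Real.log (1 - 1/2) - Real.log (1/2) = 0 := by norm_num
    rw [h1, h2]
    nlinarith
  -- pick a = (2^d+1)⁻¹
  set a : ℝ := ((2:ℝ)^d + 1)⁻¹ with ha_def
  have h2d : (2:ℝ) ≤ (2:ℝ)^d := by
    calc (2:ℝ) = 2^1 := by norm_num
    _ ≤ 2^d := pow_le_pow_right₀ (by norm_num) hd
  have ha_pos : 0 < a := by rw [ha_def]; positivity
  have ha_lt : a < 1/2 := by
    rw [ha_def, inv_lt_comm₀ (by positivity) (by norm_num)]
    norm_num; linarith
  have ha1 : a < 1 := by linarith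
  have h1a : 1 - a = (2:ℝ)^d / ((2:ℝ)^d + 1) := by
    rw [ha_def]; field_simp; ring
  have hNa : 0 < Nfun D c a := by
    unfold Nfun
    have hlog : Real.log (1 - a) - Real.log a = D * Real.log 2 := by
      rw [← Real.log_div (by rw [h1a]; positivity) (ne_of_gt ha_pos)]
      have : (1 - a) / a = (2:ℝ)^d := by
        rw [h1a, ha_def]; field_simp
      rw [this, Real.log_pow, hdD]
    rw [hlog]
    have hbe : Real.binEntropy a < Real.log 2 := by
      apply (Real.binEntropy_lt_log_two).2
      intro h
      rw [h] at ha_lt; norm_num at ha_lt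
    have hden : 1 ≤ D * a + c := by nlinarith
    have h2' : D * Real.binEntropy a < D * Real.log 2 := by
      exact mul_lt_mul_of_pos_left hbe hDpos
    have h3' : D * Real.log 2 * 1 ≤ D * Real.log 2 * (D * a + c) :=
      mul_le_mul_of_nonneg_left hden (mul_nonneg hD hl2.le)
    linarith
  -- root of N via IVT
  have hcontN : ContinuousOn (Nfun D c) (Icc a (1/2)) := by
    intro x hx
    have hx' : x ∈ Ioo (0:ℝ) 1 := ⟨lt_of_lt_of_le ha_pos hx.1, by
      have := hx.2; linarith⟩
    exact (hasDerivAt_N hx').continuousAt.continuousWithinAt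
  have hiv := intermediate_value_Ioo' (le_of_lt ha_lt) hcontN
  obtain ⟨δ₀, hδ₀mem, hNδ₀⟩ := hiv ⟨hNhalf, hNa⟩
  have hδ₀Ioo : δ₀ ∈ Ioo (0:ℝ) 1 := ⟨lt_trans ha_pos hδ₀mem.1, by linarith [hδ₀mem.2]⟩
  have hδ₀half : δ₀ ≤ 1/2 := le_of_lt hδ₀mem.2
  have hanti := N_strictAnti (D := D) (c := c) hD hc
  -- sign of N
  have hNpos : ∀ x ∈ Ioo (0:ℝ) 1, x < δ₀ → 0 < Nfun D c x := by
    intro x hx hlt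
    have := hanti hx hδ₀Ioo hlt
    rwa [hNδ₀] at this
  have hNneg : ∀ x ∈ Ioo (0:ℝ) 1, δ₀ < x → Nfun D c x < 0 := by
    intro x hx hlt
    have := hanti hδ₀Ioo hx hlt
    rwa [hNδ₀] at this
  -- continuity of G
  have hcontG : ContinuousOn G (Icc 0 1) := by
    apply ContinuousOn.div
    · exact Real.binEntropy_continuous.continuousOn
    · fun_prop
    · intro x hx; exact ne_of_gt (den_pos hD hc hx.1)
  -- strict mono on Ioc 0 δ₀, strict anti on Ico δ₀ 1
  have hmono : StrictMonoOn G (Ioc 0 δ₀) := by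
    apply strictMonoOn_of_deriv_pos (convex_Ioc 0 δ₀)
    · exact hcontG.mono (fun x hx => ⟨hx.1.le, le_trans hx.2 (by linarith)⟩)
    · intro x hx
      rw [interior_Ioc] at hx
      have hx' : x ∈ Ioo (0:ℝ) 1 := ⟨hx.1, lt_trans hx.2 hδ₀Ioo.2⟩
      rw [(hasDerivAt_G hD hc hx').deriv]
      exact div_pos (hNpos x hx' hx.2) (pow_pos (den_pos hD hc hx'.1.le) 2)
  have hantiG : StrictAntiOn G (Ico δ₀ 1) := by
    apply strictAntiOn_of_deriv_neg (convex_Ico δ₀ 1)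
    · exact hcontG.mono (fun x hx => ⟨le_trans hδ₀Ioo.1.le hx.1, hx.2.le⟩)
    · intro x hx
      rw [interior_Ico] at hx
      have hx' : x ∈ Ioo (0:ℝ) 1 := ⟨lt_trans hδ₀Ioo.1 hx.1, hx.2⟩
      rw [(hasDerivAt_G hD hc hx').deriv]
      exact div_neg_of_neg_of_pos (hNneg x hx' hx.1) (pow_pos (den_pos hD hc hx'.1.le) 2)
  -- G is strictly maximized at δ₀
  have hGmax : ∀ x ∈ Ioo (0:ℝ) 1, x ≠ δ₀ → G x < G δ₀ := by
    intro x hx hne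
    rcases lt_or_gt_of_ne hne with h | h
    · exact hmono ⟨hx.1, h.le⟩ ⟨hδ₀Ioo.1, le_refl _⟩ h
    · exact hantiG ⟨le_refl _, hδ₀Ioo.2⟩ ⟨h.le, hx.2⟩ h
  -- transfer from binEntropy to binEnt
  have hRG : ∀ x : ℝ, binEnt x / (D * x + c) = G x / Real.log 2 := by
    intro x
    rw [binEnt_eq, hG_def]
    ring
  refine ⟨δ₀, hδ₀Ioo, ?_, hδ₀half, ?_⟩
  · rw [isMaxOn_iff]
    intro x hx
    simp only [hRG]
    rcases eq_or_ne x δ₀ with rfl | hne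
    · exact le_refl _
    · exact div_le_div_of_nonneg_right ((hGmax x hx hne).le) hl2.le
  · intro δ hδ hmax
    by_contra hne
    have h1 := (isMaxOn_iff.1 hmax) δ₀ hδ₀Ioo
    simp only [hRG] at h1
    have h2 : G δ < G δ₀ := hGmax δ hδ hne
    have h3 : G δ₀ ≤ G δ := by
      have := (div_le_div_iff_of_pos_right hl2).1 h1
      exact this
    linarith
end

section
/- For d = 2 and ε ≤ 1 - 1/(2log₂(3/2)), the maximum of R(δ) = h_b(δ)/(2δ + 1/(1-ε)) over δ ∈ [0, 1/3] equals its maximum over δ ∈ [0, 1/2]. -/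
lemma log2_pos : (0:ℝ) < Real.log 2 := Real.log_pos (by norm_num)

/-- Gibbs-type inequality in natural logs. -/
lemma key_log (δ : ℝ) (h1 : 0 < δ) (h2 : δ < 1) :
    -δ * Real.log δ - (1 - δ) * Real.log (1 - δ) ≤
      δ * Real.log 2 + (Real.log 3 - Real.log 2) := by
  have hδ' : 0 < 1 - δ := by linarith
  have h3 : Real.log (1/(3*δ)) ≤ 1/(3*δ) - 1 := Real.log_le_sub_one_of_pos (by positivity)
  have h4 : Real.log (2/(3*(1-δ))) ≤ 2/(3*(1-δ)) - 1 := Real.log_le_sub_one_of_pos (by positivity)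
  rw [Real.log_div one_ne_zero (by positivity), Real.log_one,
    Real.log_mul (by norm_num) h1.ne'] at h3
  rw [Real.log_div (by norm_num) (by positivity),
    Real.log_mul (by norm_num) hδ'.ne'] at h4
  have h3' := mul_le_mul_of_nonneg_left h3 h1.le
  have h4' := mul_le_mul_of_nonneg_left h4 hδ'.le
  have e3 : δ * (1/(3*δ) - 1) = 1/3 - δ := by field_simp
  have e4 : (1-δ) * (2/(3*(1-δ)) - 1) = 2/3 - (1-δ) := by field_simp
  rw [e3] at h3'
  rw [e4] at h4'
  nlinarith [h3', h4']

lemma binEnt_le_tangent (δ : ℝ) (h1 : 0 < δ) (h2 : δ < 1) :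
    binEnt δ ≤ δ + Real.logb 2 (3/2) := by
  have hl := log2_pos
  have key := key_log δ h1 h2
  calc binEnt δ = (-δ * Real.log δ - (1-δ) * Real.log (1-δ)) / Real.log 2 := by
        unfold binEnt; simp only [Real.logb]; ring
    _ ≤ (δ * Real.log 2 + (Real.log 3 - Real.log 2)) / Real.log 2 := by gcongr
    _ = δ + Real.logb 2 (3/2) := by
        rw [Real.logb, Real.log_div (by norm_num) (by norm_num)]
        field_simp

lemma binEnt_third : binEnt (1/3) = 1/3 + Real.logb 2 (3/2) := by
  have hl := log2_pos
  unfold binEnt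
  rw [show (1:ℝ) - 1/3 = 2/3 by norm_num]
  rw [Real.logb, Real.logb, Real.logb,
    Real.log_div (by norm_num) (by norm_num),
    Real.log_div (by norm_num) (by norm_num),
    Real.log_div (by norm_num) (by norm_num), Real.log_one]
  field_simp
  ring

lemma logb_half_le : (1/2 : ℝ) ≤ Real.logb 2 (3/2) := by
  have hl := log2_pos
  have h9 : Real.log 2 ≤ Real.log ((3/2:ℝ)^2) := by
    apply Real.log_le_log (by norm_num)
    norm_num
  rw [Real.log_pow] at h9
  push_cast at h9
  rw [Real.logb, le_div_iff₀ hl]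
  linarith

lemma logb_le_one' : Real.logb 2 (3/2) ≤ 1 := by
  have : Real.logb 2 (3/2) ≤ Real.logb 2 2 :=
    Real.logb_le_logb_of_le (by norm_num) (by norm_num) (by norm_num)
  simpa using this

lemma binEnt_zero : binEnt 0 = 0 := by
  unfold binEnt
  simp

lemma binEnt_le_two (δ : ℝ) (h1 : 0 ≤ δ) (h2 : δ ≤ 1/2) : binEnt δ ≤ 2 := by
  rcases eq_or_lt_of_le h1 with h | h
  · rw [← h, binEnt_zero]; norm_num
  · have := binEnt_le_tangent δ h (by linarith)
    have := logb_le_one'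
    linarith

theorem fb_eq_nc_for_d_two (ε : ℝ) (hε : 0 ≤ ε) (hε' : ε ≤ 1 - 1 / (2 * Real.logb 2 (3 / 2))) :
    sSup ((fun δ : ℝ => binEnt δ / (2 * δ + 1 / (1 - ε))) '' Set.Icc (0:ℝ) (1 / 3)) =
    sSup ((fun δ : ℝ => binEnt δ / (2 * δ + 1 / (1 - ε))) '' Set.Icc (0:ℝ) (1 / 2)) := by
  set L := Real.logb 2 (3/2) with hLdef
  have hL2 : (1/2 : ℝ) ≤ L := logb_half_le
  have hL : 0 < L := by linarith
  have h2L : (0:ℝ) < 2 * L := by linarith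
  have h1ε : 1 / (2*L) ≤ 1 - ε := by
    have : (1:ℝ) - 1 / (2 * Real.logb 2 (3/2)) = 1 - 1/(2*L) := by rw [hLdef]
    linarith [hε']
  have hpos : 0 < 1 - ε := lt_of_lt_of_le (by positivity) h1ε
  set c := 1 / (1 - ε) with hcdef
  have hc1 : 1 ≤ c := by
    rw [hcdef, le_div_iff₀ hpos]; linarith
  have hc2 : c ≤ 2 * L := by
    rw [hcdef, div_le_iff₀ hpos]
    have := (div_le_iff₀ h2L).mp h1ε
    nlinarith
  set f : ℝ → ℝ := fun δ => binEnt δ / (2 * δ + c) with hfdef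
  -- pointwise bound: f δ ≤ f (1/3) on [1/3, 1/2]
  have hkey : ∀ δ : ℝ, 1/3 ≤ δ → δ ≤ 1/2 → f δ ≤ f (1/3) := by
    intro δ hδ1 hδ2
    have hδpos : (0:ℝ) < δ := by linarith
    have hden1 : (0:ℝ) < 2 * δ + c := by linarith
    have hden2 : (0:ℝ) < 2 * (1/3 : ℝ) + c := by linarith
    have htan : binEnt δ ≤ δ + L := binEnt_le_tangent δ hδpos (by linarith)
    have h13 : binEnt (1/3) = 1/3 + L := binEnt_third
    rw [hfdef]
    simp only
    rw [div_le_div_iff₀ hden1 hden2, h13]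
    nlinarith [mul_nonneg (by linarith : (0:ℝ) ≤ 2*L - c) (by linarith : (0:ℝ) ≤ δ - 1/3),
      mul_le_mul_of_nonneg_right htan hden2.le]
  -- upper bound 2 on f over [0, 1/2]
  have hbd : ∀ δ : ℝ, 0 ≤ δ → δ ≤ 1/2 → f δ ≤ 2 := by
    intro δ hδ1 hδ2
    have hden : (0:ℝ) < 2 * δ + c := by linarith
    rw [hfdef]
    simp only
    rw [div_le_iff₀ hden]
    have := binEnt_le_two δ hδ1 hδ2
    nlinarith
  have hA : BddAbove (f '' Set.Icc (0:ℝ) (1/3)) := by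
    refine ⟨2, ?_⟩
    rintro x ⟨δ, ⟨hδ1, hδ2⟩, rfl⟩
    exact hbd δ hδ1 (by linarith)
  have hB : BddAbove (f '' Set.Icc (0:ℝ) (1/2)) := by
    refine ⟨2, ?_⟩
    rintro x ⟨δ, ⟨hδ1, hδ2⟩, rfl⟩
    exact hbd δ hδ1 hδ2
  have hAne : (f '' Set.Icc (0:ℝ) (1/3)).Nonempty :=
    ⟨f 0, ⟨0, ⟨le_refl _, by norm_num⟩, rfl⟩⟩
  have hBne : (f '' Set.Icc (0:ℝ) (1/2)).Nonempty :=
    ⟨f 0, ⟨0, ⟨le_refl _, by norm_num⟩, rfl⟩⟩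
  apply le_antisymm
  · exact csSup_le_csSup hB hAne (Set.image_mono (Set.Icc_subset_Icc le_rfl (by norm_num)))
  · apply csSup_le hBne
    rintro b ⟨δ, ⟨hδ1, hδ2⟩, rfl⟩
    rcases le_or_gt δ (1/3) with h | h
    · exact le_csSup hA ⟨δ, ⟨hδ1, h⟩, rfl⟩
    · exact le_trans (hkey δ h.le hδ2)
        (le_csSup hA ⟨1/3, ⟨by norm_num, le_rfl⟩, rfl⟩)
end

section
/- For every integer d ≥ 3 and every ε ∈ [0,1), the function R(δ) = h_b(δ)/(dδ + 1/(1-ε)) is strictly increasing on (0, 1/(d+1)], and hence max over δ ∈ [0, 1/(d+1)] of R(δ) = R(1/(d+1)). -/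
lemma binEnt_hasDerivAt {x : ℝ} (h0 : 0 < x) (h1 : x < 1) :
    HasDerivAt binEnt (Real.logb 2 (1 - x) - Real.logb 2 x) x := by
  have hlog2 : Real.log 2 ≠ 0 := by
    have := Real.log_pos (by norm_num : (1:ℝ) < 2); linarith
  have heq : binEnt = fun p => (-(p * Real.log p) - (1 - p) * Real.log (1 - p)) / Real.log 2 := by
    funext p
    unfold binEnt Real.logb
    field_simp
  rw [heq]
  have h1' : (1:ℝ) - x ≠ 0 := by linarith
  have hA : HasDerivAt (fun p : ℝ => p * Real.log p) (Real.log x + 1) x :=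
    Real.hasDerivAt_mul_log h0.ne'
  have hsub : HasDerivAt (fun p : ℝ => 1 - p) (-1 : ℝ) x := by
    simpa using (hasDerivAt_id' x).const_sub (1:ℝ)
  have hB : HasDerivAt (fun p : ℝ => (1 - p) * Real.log (1 - p))
      ((Real.log (1 - x) + 1) * (-1)) x :=
    (Real.hasDerivAt_mul_log h1').comp x hsub
  have hC : HasDerivAt (fun p : ℝ => -(p * Real.log p) - (1 - p) * Real.log (1 - p))
      (-(Real.log x + 1) - (Real.log (1 - x) + 1) * (-1)) x := hA.neg.sub hB
  have := hC.div_const (Real.log 2)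
  refine this.congr_deriv ?_
  unfold Real.logb
  field_simp
  ring

lemma binEnt_nonneg {p : ℝ} (h0 : 0 ≤ p) (h1 : p ≤ 1) : 0 ≤ binEnt p := by
  unfold binEnt
  have h1' : Real.logb 2 p ≤ 0 := Real.logb_nonpos (by norm_num) h0 h1
  have h2' : Real.logb 2 (1 - p) ≤ 0 := Real.logb_nonpos (by norm_num) (by linarith) (by linarith)
  nlinarith

theorem R_strictMono_d_ge_three (d : ℕ) (hd : 3 ≤ d) (ε : ℝ) (hε : ε ∈ Set.Ico (0:ℝ) 1) :
    StrictMonoOn (fun δ : ℝ => binEnt δ / (d * δ + 1 / (1 - ε))) (Set.Ioc (0:ℝ) (1 / (d + 1))) ∧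
    IsGreatest ((fun δ : ℝ => binEnt δ / (d * δ + 1 / (1 - ε))) '' Set.Icc (0:ℝ) (1 / (d + 1)))
      (binEnt (1 / (d + 1)) / (d * (1 / (d + 1)) + 1 / (1 - ε))) := by
  obtain ⟨hε0, hε1⟩ := hε
  have h1ε : 0 < 1 - ε := by linarith
  set k : ℝ := 1 / (1 - ε) with hkdef
  have hk1 : 1 ≤ k := by
    rw [hkdef, le_div_iff₀ h1ε]; linarith
  have hk0 : 0 < k := lt_of_lt_of_le one_pos hk1
  set D : ℝ := (d : ℝ) with hDdef
  have hD3 : (3:ℝ) ≤ D := by rw [hDdef]; exact_mod_cast hd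
  have hD0 : (0:ℝ) < D := by linarith
  have hD1 : (0:ℝ) < D + 1 := by linarith
  set e : ℝ := 1 / (D + 1) with hedef
  have he0 : 0 < e := by positivity
  have he1 : e < 1 := by
    rw [hedef, div_lt_one hD1]; linarith
  -- denominator positive on [0, ∞)
  have hden : ∀ x : ℝ, 0 ≤ x → 0 < D * x + k := by
    intro x hx
    have : 0 ≤ D * x := mul_nonneg hD0.le hx
    linarith
  have hlog2pos : (0:ℝ) < Real.log 2 := Real.log_pos (by norm_num)
  -- key inequality
  have hkey : ∀ x : ℝ, 0 < x → x ≤ e → 0 < (D + k) * Real.log (1 - x) - k * Real.log x := by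
    intro x hx hxe
    have hx1 : x < 1 := lt_of_le_of_lt hxe he1
    have hlogx : Real.log x ≤ Real.log e := Real.log_le_log hx hxe
    have hloge : Real.log e = -Real.log (D + 1) := by
      rw [hedef, one_div, Real.log_inv]
    have h1xe : 1 - e ≤ 1 - x := by linarith
    have h1e : 1 - e = D / (D + 1) := by
      rw [hedef]; field_simp; ring
    have hlog1x : Real.log (1 - e) ≤ Real.log (1 - x) :=
      Real.log_le_log (by rw [h1e]; positivity) h1xe
    have hlog1e : Real.log (1 - e) = Real.log D - Real.log (D + 1) := by
      rw [h1e, Real.log_div hD0.ne' hD1.ne']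
    -- log(1 + 1/D) < 1/D, i.e. log((D+1)/D) < 1/D
    have hratio : Real.log ((D + 1) / D) < 1 / D := by
      have h1lt : (1:ℝ) < (D + 1) / D := by
        rw [lt_div_iff₀ hD0]; linarith
      have := Real.log_lt_sub_one_of_pos (by positivity : (0:ℝ) < (D+1)/D) (by linarith)
      calc Real.log ((D + 1) / D) < (D + 1) / D - 1 := this
        _ = 1 / D := by field_simp; ring
    have hratio' : Real.log (D + 1) - Real.log D < 1 / D := by
      rwa [← Real.log_div hD1.ne' hD0.ne']
    have hlog3 : (1:ℝ) < Real.log 3 := by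
      rw [show (1:ℝ) = Real.log (Real.exp 1) by rw [Real.log_exp]]
      apply Real.log_lt_log (Real.exp_pos 1)
      have := Real.exp_one_lt_d9
      linarith
    have hlogD : (1:ℝ) < Real.log D :=
      lt_of_lt_of_le hlog3 (Real.log_le_log (by norm_num) hD3)
    -- (D+k) log D - D log(D+1) > 0
    have hmain : 0 < (D + k) * Real.log D - D * Real.log (D + 1) := by
      have h1 : D * (Real.log (D + 1) - Real.log D) < D * (1 / D) :=
        mul_lt_mul_of_pos_left hratio' hD0
      have h2 : D * (1 / D) = 1 := by field_simp
      have h3 : 1 < k * Real.log D := by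
        calc (1:ℝ) < Real.log D := hlogD
          _ = 1 * Real.log D := (one_mul _).symm
          _ ≤ k * Real.log D := by
              apply mul_le_mul_of_nonneg_right hk1 (by linarith)
      nlinarith
    have hstep1 : (D + k) * (Real.log D - Real.log (D + 1)) ≤ (D + k) * Real.log (1 - x) := by
      apply mul_le_mul_of_nonneg_left _ (by linarith)
      rw [← hlog1e]; exact hlog1x
    have hstep2 : k * Real.log x ≤ k * (-Real.log (D + 1)) := by
      apply mul_le_mul_of_nonneg_left _ hk0.le
      rw [← hloge]; exact hlogx
    nlinarith
  -- derivative of f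
  set f : ℝ → ℝ := fun δ : ℝ => binEnt δ / (D * δ + k) with hfdef
  have hderiv : ∀ x : ℝ, 0 < x → x < 1 →
      HasDerivAt f (((Real.logb 2 (1 - x) - Real.logb 2 x) * (D * x + k) - binEnt x * D)
        / (D * x + k) ^ 2) x := by
    intro x hx hx1
    have hb := binEnt_hasDerivAt hx hx1
    have hdenD : HasDerivAt (fun p : ℝ => D * p + k) D x := by
      simpa using ((hasDerivAt_id x).const_mul D).add_const k
    exact hb.div hdenD (hden x hx.le).ne'
  have hderivpos : ∀ x ∈ Set.Ioo (0:ℝ) e, 0 < deriv f x := by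
    intro x hx
    obtain ⟨hx0, hxe⟩ := hx
    have hx1 : x < 1 := lt_trans hxe he1
    rw [(hderiv x hx0 hx1).deriv]
    apply div_pos _ (by positivity)
    have hnum : (Real.logb 2 (1 - x) - Real.logb 2 x) * (D * x + k) - binEnt x * D
        = ((D + k) * Real.log (1 - x) - k * Real.log x) / Real.log 2 := by
      unfold binEnt Real.logb
      field_simp
      ring
    rw [hnum]
    exact div_pos (hkey x hx0 hxe.le) hlog2pos
  have hcont : ContinuousOn f (Set.Ioc (0:ℝ) e) := by
    intro x hx
    exact ((hderiv x hx.1 (lt_of_le_of_lt hx.2 he1)).continuousAt).continuousWithinAt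
  have hmono : StrictMonoOn f (Set.Ioc (0:ℝ) e) := by
    apply strictMonoOn_of_deriv_pos (convex_Ioc 0 e) hcont
    intro x hx
    rw [interior_Ioc] at hx
    exact hderivpos x hx
  constructor
  · exact hmono
  · constructor
    · exact ⟨e, ⟨he0.le, le_refl e⟩, rfl⟩
    · rintro y ⟨x, ⟨hx0, hxe⟩, rfl⟩
      rcases eq_or_lt_of_le hx0 with h | h
      · have h0 : f 0 = 0 := by
          simp [hfdef, binEnt, Real.logb]
        have hfe : 0 ≤ f e := by
          apply div_nonneg (binEnt_nonneg he0.le he1.le) (hden e he0.le).le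
        simp only [← h]
        rw [h0] at *
        exact hfe
      · rcases eq_or_lt_of_le hxe with h2 | h2
        · rw [h2]
        · exact (hmono ⟨h, hxe⟩ ⟨he0, le_refl e⟩ h2).le
end

section
/- Let d be a positive integer and let a ∈ [0, 1/(d+1)]. Let w ∈ {0,?}^d be a d-tuple, and for each position s with w_s = ?, let β_s denote the number of indices i < s with w_i = 0. Then ∑_{s: w_s = ?} (1/(1-a))^{β_s} ≤ d. -/
lemma nat_key (d k : ℕ) : (d - k) * (d + 1) ^ k ≤ d ^ (k + 1) := by
  induction k with
  | zero => simp
  | succ k ih =>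
    have h1 : (d - (k + 1)) * (d + 1) ≤ (d - k) * d := by
      rcases le_or_gt d k with h | h
      · simp [Nat.sub_eq_zero_of_le (le_trans h (Nat.le_succ k))]
      · have h2 : d - (k + 1) + 1 = d - k := by omega
        have h3 : d - (k + 1) ≤ d := Nat.sub_le _ _
        nlinarith
    calc (d - (k + 1)) * (d + 1) ^ (k + 1)
        = ((d - (k + 1)) * (d + 1)) * (d + 1) ^ k := by ring
      _ ≤ ((d - k) * d) * (d + 1) ^ k := Nat.mul_le_mul_right _ h1
      _ = d * ((d - k) * (d + 1) ^ k) := by ring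
      _ ≤ d * d ^ (k + 1) := Nat.mul_le_mul_left _ ih
      _ = d ^ (k + 1 + 1) := by ring

/-- For a `d`-tuple `w` over `{0, ?}` (encoded as `Bool`, with `false` standing for `0`
and `true` standing for `?`), and `a ∈ [0, 1/(d+1)]`, the sum over positions `s` with
`w s = ?` of `(1/(1-a))^{β_s}` is at most `d`, where `β_s` counts indices `i < s` with
`w i = 0`. -/
theorem belief_sum_le (d : ℕ) (hd : 1 ≤ d) (a : ℝ) (ha : a ∈ Set.Icc (0:ℝ) (1 / (d + 1)))
    (w : Fin d → Bool) :
    ∑ s ∈ Finset.univ.filter (fun s : Fin d => w s = true),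
      (1 / (1 - a)) ^ ((Finset.univ.filter (fun i : Fin d => i < s ∧ w i = false)).card)
      ≤ (d : ℝ) := by
  obtain ⟨ha0, ha1⟩ := ha
  have hd0 : (0:ℝ) < d := by exact_mod_cast hd
  have hdp1 : (0:ℝ) < (d:ℝ) + 1 := by linarith
  have hA : a * ((d:ℝ) + 1) ≤ 1 := (le_div_iff₀ hdp1).mp ha1
  have h1a : 0 < 1 - a := by nlinarith
  set r : ℝ := 1 / (1 - a) with hr_def
  have hr1 : 1 ≤ r := by
    rw [hr_def, le_div_iff₀ h1a]; nlinarith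
  have hr : r ≤ ((d:ℝ) + 1) / d := by
    rw [hr_def, div_le_div_iff₀ h1a hd0]; nlinarith
  set S := Finset.univ.filter (fun s : Fin d => w s = true) with hS
  set Z := Finset.univ.filter (fun i : Fin d => w i = false) with hZ
  set m := S.card with hm
  set k := Z.card with hk
  have hmk : m + k = d := by
    rw [hm, hk, hS, hZ]
    have := Finset.card_filter_add_card_filter_not
      (s := (Finset.univ : Finset (Fin d))) (p := fun s : Fin d => w s = true)
    simpa [Bool.not_eq_true] using this
  have hstep : ∀ s ∈ S,
      r ^ ((Finset.univ.filter (fun i : Fin d => i < s ∧ w i = false)).card) ≤ r ^ k := by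
    intro s _
    apply pow_le_pow_right₀ hr1
    rw [hk, hZ]
    apply Finset.card_le_card
    intro i hi
    simp only [Finset.mem_filter] at hi ⊢
    exact ⟨hi.1, hi.2.2⟩
  calc ∑ s ∈ S, r ^ ((Finset.univ.filter (fun i : Fin d => i < s ∧ w i = false)).card)
      ≤ ∑ _s ∈ S, r ^ k := Finset.sum_le_sum hstep
    _ = (m : ℝ) * r ^ k := by rw [Finset.sum_const, nsmul_eq_mul]
    _ ≤ (m : ℝ) * (((d:ℝ) + 1) / d) ^ k := by
        apply mul_le_mul_of_nonneg_left _ (by positivity)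
        exact pow_le_pow_left₀ (by positivity) hr k
    _ ≤ (d : ℝ) := by
        have hnat : m * (d + 1) ^ k ≤ d ^ (k + 1) := by
          have := nat_key d k
          have hdk : d - k = m := by omega
          rwa [hdk] at this
        have hcast : (m : ℝ) * ((d:ℝ) + 1) ^ k ≤ (d:ℝ) ^ (k + 1) := by
          exact_mod_cast hnat
        rw [div_pow]
        rw [← mul_div_assoc, div_le_iff₀ (by positivity)]
        calc (m:ℝ) * ((d:ℝ) + 1) ^ k ≤ (d:ℝ) ^ (k + 1) := hcast
          _ = (d:ℝ) * (d:ℝ) ^ k := by ring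
end

section
/- Let d ≥ 1 be an integer and n_? ∈ [0, d] an integer. Then n_? · (1 + 1/d)^{d - n_?} ≤ d. -/
lemma key_step_aux (d : ℕ) (hd : 1 ≤ d) :
    ∀ k : ℕ, k ≤ d → ((d : ℝ) - k) * (1 + 1 / d) ^ k ≤ (d : ℝ) := by
  intro k
  induction k with
  | zero => simp
  | succ k ih =>
    intro hk
    have hk' : k ≤ d := Nat.le_of_succ_le hk
    have hdpos : (0 : ℝ) < d := by exact_mod_cast hd
    push_cast
    refine le_trans ?_ (ih hk')
    have hpow : (0 : ℝ) ≤ (1 + 1 / d) ^ k := by positivity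
    have hkd : (k : ℝ) + 1 ≤ d := by exact_mod_cast hk
    have h2 : ((d : ℝ) - (k + 1)) * (1 / d) ≤ 1 := by
      rw [mul_one_div, div_le_one hdpos]; linarith
    have hstep : ((d : ℝ) - (k + 1)) * (1 + 1 / d) ≤ (d : ℝ) - k := by
      nlinarith [h2]
    calc ((d : ℝ) - (k + 1)) * (1 + 1 / d) ^ (k + 1)
        = ((d : ℝ) - (k + 1)) * (1 + 1 / d) * (1 + 1 / d) ^ k := by ring
      _ ≤ ((d : ℝ) - k) * (1 + 1 / d) ^ k :=
          mul_le_mul_of_nonneg_right hstep hpow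

theorem key_step (d n : ℕ) (hd : 1 ≤ d) (hn : n ≤ d) :
    (n : ℝ) * (1 + 1 / d) ^ (d - n) ≤ (d : ℝ) := by
  have h := key_step_aux d hd (d - n) (Nat.sub_le d n)
  have heq : ((d : ℝ) - ((d - n : ℕ) : ℝ)) = n := by
    rw [Nat.cast_sub hn]; ring
  rwa [heq] at h
end
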